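/- arXiv:2506.06013 — 2 statements merged into one kernel-verified Lean document; each statement's English description precedes it below -/
import Mathlib

section
/- Projection of trap spaces from the perturbed encoding: let g be the perturbation-encoding network of f with perturbable set X, and let m be a trap space of g with m(v^k) ≠ ⋆ and m(v^o) ≠ ⋆ for all v ∈ X. Define the perturbation σ on X by σ(v) = 1 if m(v^k)=0 ∧ m(v^o)=1, σ(v) = 0 if m(v^k)=1 ∧ m(v^o)=0, σ(v) = ⋆ if m(v^k)=0 ∧ m(v^o)=0. Then the restriction m' of m to V is a trap space of the perturbed network f^σ. -/
/-- A state `s` belongs to the subspace `m` (none = free/⋆). -/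
def inSub {V : Type*} (m : V → Option Bool) (s : V → Bool) : Prop :=
  ∀ v b, m v = some b → s v = b

/-- The synchronous update of a Boolean network. -/
def syncUpdate {V : Type*} (f : V → (V → Bool) → Bool) (s : V → Bool) : V → Bool :=
  fun v => f v s

/-- `m` is a trap space: `S[m]` is closed under the synchronous update. -/
def IsTrapSpace {V : Type*} (f : V → (V → Bool) → Bool) (m : V → Option Bool) : Prop :=
  ∀ s, inSub m s → inSub m (syncUpdate f s)

/-- Boolean expressions over a variable set `V`. -/
inductive BExpr (V : Type*) where
  | const : Bool → BExpr V
  | var : V → BExpr V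
  | not : BExpr V → BExpr V
  | and : BExpr V → BExpr V → BExpr V
  | or : BExpr V → BExpr V → BExpr V

/-- Two-valued evaluation of a Boolean expression at a state. -/
def BExpr.eval {V : Type*} : BExpr V → (V → Bool) → Bool
  | .const b, _ => b
  | .var v, s => s v
  | .not e, s => !(e.eval s)
  | .and e₁ e₂, s => e₁.eval s && e₂.eval s
  | .or e₁ e₂, s => e₁.eval s || e₂.eval s

/-- Minimum w.r.t. the total order 0 <_t ⋆ <_t 1 (⋆ = none). -/
def tmin : Option Bool → Option Bool → Option Bool
  | some false, _ => some false
  | _, some false => some false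
  | some true, y => y
  | x, some true => x
  | none, none => none

/-- Maximum w.r.t. the total order 0 <_t ⋆ <_t 1 (⋆ = none). -/
def tmax : Option Bool → Option Bool → Option Bool
  | some true, _ => some true
  | _, some true => some true
  | some false, y => y
  | x, some false => x
  | none, none => none

/-- Kleene three-valued evaluation of a Boolean expression under a subspace. -/
def BExpr.keval {V : Type*} : BExpr V → (V → Option Bool) → Option Bool
  | .const b, _ => some b
  | .var v, m => m v
  | .not e, m => (e.keval m).map (fun b => !b)
  | .and e₁ e₂, m => tmin (e₁.keval m) (e₂.keval m)
  | .or e₁ e₂, m => tmax (e₁.keval m) (e₂.keval m)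

/-- The partial order ≤_s on {0,1,⋆}: x ≤_s y iff x = y or y = ⋆. -/
def leS (x y : Option Bool) : Prop := x = y ∨ y = none

/-- Trap space via the three-valued characterization: m(f_v) ≤_s m(v) for all v. -/
def IsTrapK {V : Type*} (f : V → BExpr V) (m : V → Option Bool) : Prop :=
  ∀ v, leS ((f v).keval m) (m v)

/-- ≤_s-minimal trap space (three-valued characterization). -/
def IsMinTrapK {V : Type*} (f : V → BExpr V) (m : V → Option Bool) : Prop :=
  IsTrapK f m ∧ ∀ m', IsTrapK f m' → (∀ v, leS (m' v) (m v)) → m' = m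

/-- Renaming of variables in a Boolean expression. -/
def BExpr.map {V W : Type*} (φ : V → W) : BExpr V → BExpr W
  | .const b => .const b
  | .var v => .var (φ v)
  | .not e => .not (e.map φ)
  | .and e₁ e₂ => .and (e₁.map φ) (e₂.map φ)
  | .or e₁ e₂ => .or (e₁.map φ) (e₂.map φ)

/-- Variables of the perturbation-encoding network: original variables plus,
for each perturbable `v ∈ X`, variables `v^k = inr (v, true)` and `v^o = inr (v, false)`. -/
abbrev PVar (V : Type) (X : Finset V) := V ⊕ ({v : V // v ∈ X} × Bool)

/-- The perturbation-encoding network `g` of `f` w.r.t. perturbable set `X`: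
`g_{v^k} = v^k`, `g_{v^o} = v^o ∧ ¬v^k`, `g_v = ¬v^k ∧ (v^o ∨ f_v)` for `v ∈ X`,
and `g_u = f_u` otherwise. -/
def pertEnc {V : Type} [DecidableEq V] (f : V → BExpr V) (X : Finset V) :
    PVar V X → BExpr (PVar V X)
  | .inl v =>
      if h : v ∈ X then
        .and (.not (.var (.inr (⟨v, h⟩, true))))
          (.or (.var (.inr (⟨v, h⟩, false))) ((f v).map .inl))
      else (f v).map .inl
  | .inr (x, true) => .var (.inr (x, true))
  | .inr (x, false) => .and (.var (.inr (x, false))) (.not (.var (.inr (x, true))))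

/-- The perturbed network `f^σ`: perturbed variables get the constant `σ(v)`,
unperturbed ones (σ(v) = ⋆) keep `f_v`. -/
def pertNet {V : Type} [DecidableEq V] (f : V → BExpr V) (X : Finset V)
    (σ : {v : V // v ∈ X} → Option Bool) : V → BExpr V := fun v =>
  if h : v ∈ X then
    match σ ⟨v, h⟩ with
    | some b => .const b
    | none => f v
  else f v

/-- Decode the perturbation from the values of `v^k` and `v^o`:
σ(v) = 1 iff (k,o) = (0,1); σ(v) = 0 iff (k,o) = (1,0); σ(v) = ⋆ iff (k,o) = (0,0). -/
def decodePert (k o : Option Bool) : Option Bool :=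
  if k = some false ∧ o = some true then some true
  else if k = some true ∧ o = some false then some false
  else none

/-! Under a trap space `m` of the encoding with every `v^k`, `v^o` fixed, the combination
`(v^k, v^o) = (1, 1)` is impossible, since `g_{v^o} = v^o ∧ ¬v^k` then evaluates to `0`.
In each of the three remaining combinations the Kleene value of `g_v` at `m` coincides with that
of `(f^σ)_v` at the restriction of `m`, so the trap condition at `v` transfers unchanged. -/

@[simp]
theorem BExpr.keval_map {V W : Type*} (φ : V → W) (e : BExpr V) (m : W → Option Bool) :
    (e.map φ).keval m = e.keval (m ∘ φ) := by
  induction e <;> simp_all [BExpr.map, BExpr.keval]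

@[simp] theorem tmin_some_true_left (y : Option Bool) : tmin (some true) y = y := by
  rcases y with _ | _ | _ <;> rfl

@[simp] theorem tmin_some_false_left (y : Option Bool) : tmin (some false) y = some false := by
  rcases y with _ | _ | _ <;> rfl

@[simp] theorem tmin_some_false_right (x : Option Bool) : tmin x (some false) = some false := by
  rcases x with _ | _ | _ <;> rfl

@[simp] theorem tmax_some_true_left (y : Option Bool) : tmax (some true) y = some true := by
  rcases y with _ | _ | _ <;> rfl

@[simp] theorem tmax_some_false_left (y : Option Bool) : tmax (some false) y = y := by
  rcases y with _ | _ | _ <;> rfl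

section PerturbationEncoding

variable {V : Type} [DecidableEq V] {f : V → BExpr V} {X : Finset V} {m : PVar V X → Option Bool}

theorem IsTrapK.pertEnc_override_eq_false (hm : IsTrapK (pertEnc f X) m) {x : {v : V // v ∈ X}}
    (hk : m (.inr (x, true)) = some true) (ho : m (.inr (x, false)) ≠ none) :
    m (.inr (x, false)) = some false := by
  have h := hm (.inr (x, false))
  simp only [pertEnc, BExpr.keval, hk, Option.map_some, Bool.not_true,
    tmin_some_false_right, leS] at h
  exact h.resolve_right ho |>.symm

theorem keval_pertNet_of_not_mem (σ : {v : V // v ∈ X} → Option Bool) {v : V} (hv : v ∉ X) :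
    (pertNet f X σ v).keval (m ∘ .inl) = (pertEnc f X (.inl v)).keval m := by
  simp [pertNet, pertEnc, hv]

theorem keval_pertNet_of_mem {v : V} (hv : v ∈ X) {k o : Bool}
    (hk : m (.inr (⟨v, hv⟩, true)) = some k) (ho : m (.inr (⟨v, hv⟩, false)) = some o)
    (hko : k = true → o = false) :
    (pertNet f X (fun x => decodePert (m (.inr (x, true))) (m (.inr (x, false)))) v).keval
        (m ∘ .inl) =
      (pertEnc f X (.inl v)).keval m := by
  simp only [pertNet, pertEnc, hv, dif_pos, decodePert, hk, ho, BExpr.keval, BExpr.keval_map]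
  cases k <;> cases o <;> simp_all [BExpr.keval]

end PerturbationEncoding

theorem trap_space_projection_general {V : Type} [DecidableEq V]
    (f : V → BExpr V) (X : Finset V) (m : PVar V X → Option Bool)
    (hm : IsTrapK (pertEnc f X) m)
    (hfix : ∀ (x : {v : V // v ∈ X}) (b : Bool), m (.inr (x, b)) ≠ none) :
    IsTrapK
      (pertNet f X (fun x => decodePert (m (.inr (x, true))) (m (.inr (x, false)))))
      (fun v => m (.inl v)) := by
  intro v
  suffices h : (pertNet f X _ v).keval (m ∘ .inl) = (pertEnc f X (.inl v)).keval m by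
    show leS ((pertNet f X _ v).keval (m ∘ .inl)) (m (.inl v))
    exact h ▸ hm (.inl v)
  by_cases hv : v ∈ X
  · obtain ⟨k, hk⟩ := Option.ne_none_iff_exists'.mp (hfix ⟨v, hv⟩ true)
    obtain ⟨o, ho⟩ := Option.ne_none_iff_exists'.mp (hfix ⟨v, hv⟩ false)
    refine keval_pertNet_of_mem hv hk ho fun hk' => ?_
    subst hk'
    simpa [ho] using hm.pertEnc_override_eq_false hk (hfix _ false)
  · exact keval_pertNet_of_not_mem _ hv

/-- Projection of trap spaces from the perturbed encoding: if `m` is a trap space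
of `g` with all encoding variables fixed, then the restriction of `m` to `V`
is a trap space of the perturbed network `f^σ`, where `σ` is decoded from `m`. -/
theorem trap_space_projection {V : Type} [Fintype V] [DecidableEq V]
    (f : V → BExpr V) (X : Finset V) (m : PVar V X → Option Bool)
    (hm : IsTrapK (pertEnc f X) m)
    (hfix : ∀ (x : {v : V // v ∈ X}) (b : Bool), m (.inr (x, b)) ≠ none) :
    IsTrapK
      (pertNet f X (fun x => decodePert (m (.inr (x, true))) (m (.inr (x, false)))))
      (fun v => m (.inl v)) :=
  trap_space_projection_general f X m hm hfix
end

section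
/- Perturbation counting correctness: the number of perturbations σ : X → {0,1,⋆} such that f^σ has at least one minimal trap space satisfying a phenotype β equals the number of distinct restrictions to the encoding variables {v^k, v^o : v ∈ X} of minimal trap spaces of the encoding network g that satisfy β, i.e., the cardinality of the image of {m : m minimal trap space of g, m ⊨ β} under restriction to the encoding variables. -/
/-- A phenotype: a finite conjunction of constraints (v ↔ e) with e ∈ {0,1,⋆};
a subspace satisfies it iff it assigns each constrained variable its value. -/
def SatPhenotype {V : Type} (β : List (V × Option Bool)) (m : V → Option Bool) : Prop :=
  ∀ p ∈ β, m p.1 = p.2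

/-!
A minimal trap space of the encoding network `g` must fix every `v^k` and `v^o` (otherwise
fixing the free one to `0` gives a smaller trap space), and the trap condition of `v^o`
excludes `(v^k, v^o) = (1, 1)`. So it is the lift `Sum.elim n (encodePert σ)` of a subspace `n`
of the original variables along a perturbation `σ`. Along such a lift, `g_v` evaluates exactly
as `f^σ_v` does on `n`, so the lift is a (minimal) trap space of `g` iff `n` is one of `f^σ`.
Hence restriction to the encoding variables maps the minimal trap spaces of `g` satisfying `β`
onto the image of the counted perturbations under the injective map `encodePert`.
-/

instance (x y : Option Bool) : Decidable (leS x y) :=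
  inferInstanceAs (Decidable (_ ∨ _))

theorem leS_refl (x : Option Bool) : leS x x := Or.inl rfl

theorem leS_none (x : Option Bool) : leS x none := Or.inr rfl

theorem leS_trans : ∀ {x y z : Option Bool}, leS x y → leS y z → leS x z := by decide

theorem eq_of_leS_some {x : Option Bool} {b : Bool} (h : leS x (some b)) : x = some b :=
  h.resolve_right (Option.some_ne_none b)

theorem tmin_leS_tmin : ∀ {a a' b b' : Option Bool},
    leS a a' → leS b b' → leS (tmin a b) (tmin a' b') := by decide

theorem tmax_leS_tmax : ∀ {a a' b b' : Option Bool},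
    leS a a' → leS b b' → leS (tmax a b) (tmax a' b') := by decide

theorem map_not_leS_map_not : ∀ {a b : Option Bool},
    leS a b → leS (a.map (fun c => !c)) (b.map (fun c => !c)) := by decide

namespace BExpr

variable {V W : Type*}

theorem keval_mono (e : BExpr V) {m m' : V → Option Bool} (h : ∀ v, leS (m' v) (m v)) :
    leS (e.keval m') (e.keval m) := by
  induction e with
  | const b => exact leS_refl _
  | var v => exact h v
  | not e ih => exact map_not_leS_map_not ih
  | and e₁ e₂ ih₁ ih₂ => exact tmin_leS_tmin ih₁ ih₂
  | or e₁ e₂ ih₁ ih₂ => exact tmax_leS_tmax ih₁ ih₂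

theorem keval_map_s15 (φ : V → W) (e : BExpr V) (m : W → Option Bool) :
    (e.map φ).keval m = e.keval (m ∘ φ) := by
  induction e <;> simp [BExpr.map, BExpr.keval, *]

end BExpr

section Update

variable {V : Type*} [DecidableEq V] {h : V → BExpr V} {m : V → Option Bool} {v : V}

theorem update_leS (hv : m v = none) (b : Bool) :
    ∀ w, leS (Function.update m v (some b) w) (m w) := by
  intro w
  by_cases hw : w = v
  · subst hw
    simp only [hv, Function.update_self, leS_none]
  · simp only [Function.update_of_ne hw, leS_refl]

theorem IsTrapK.update (hm : IsTrapK h m) (hv : m v = none) {b : Bool}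
    (hb : leS ((h v).keval (Function.update m v (some b))) (some b)) :
    IsTrapK h (Function.update m v (some b)) := by
  intro u
  by_cases hu : u = v
  · subst hu
    rwa [Function.update_self]
  · rw [Function.update_of_ne hu]
    exact leS_trans ((h u).keval_mono (update_leS hv b)) (hm u)

theorem IsMinTrapK.ne_none (hm : IsMinTrapK h m) {b : Bool}
    (hb : leS ((h v).keval (Function.update m v (some b))) (some b)) : m v ≠ none := by
  intro hv
  have hupd := hm.2 _ (hm.1.update hv hb) (update_leS hv b)
  simpa [hv] using congrFun hupd v

end Update

/-- The `v^k` bit (`b = true`) and the `v^o` bit (`b = false`) encoding the value `s` of a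
perturbation at `v`. -/
def encodeBit (s : Option Bool) : Bool → Bool
  | true => s == some false
  | false => s == some true

theorem encodeBit_injective {s s' : Option Bool} (h : encodeBit s = encodeBit s') : s = s' := by
  have hk := congrFun h true
  have ho := congrFun h false
  revert s s'
  decide

/-- The Kleene value of `g_v = ¬v^k ∧ (v^o ∨ f_v)` when `(v^k, v^o)` encodes `s`. -/
theorem tmin_encodeBit_tmax : ∀ s y : Option Bool,
    tmin ((some (encodeBit s true)).map (fun c => !c)) (tmax (some (encodeBit s false)) y) =
      s.elim y some := by
  decide

theorem encodeBit_decodePert : ∀ {k o : Option Bool}, k ≠ none → o ≠ none →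
    leS (tmin o (k.map (fun c => !c))) o →
    some (encodeBit (decodePert k o) true) = k ∧ some (encodeBit (decodePert k o) false) = o := by
  decide

section Encoding

variable {V : Type} {X : Finset V}

def encodePert (σ : {v : V // v ∈ X} → Option Bool) (p : {v : V // v ∈ X} × Bool) :
    Option Bool :=
  some (encodeBit (σ p.1) p.2)

theorem encodePert_injective : Function.Injective (encodePert (X := X)) := fun _ _ h =>
  funext fun x => encodeBit_injective <| funext fun b => Option.some_injective _ (congrFun h (x, b))

/-- The encoding variables are fixed in a lift, so everything below it is again a lift. -/
theorem eq_sum_elim_of_leS {σ : {v : V // v ∈ X} → Option Bool} {m : PVar V X → Option Bool}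
    {n : V → Option Bool}
    (h : ∀ u, leS (m u) (Sum.elim n (encodePert σ) u)) :
    m = Sum.elim (m ∘ .inl) (encodePert σ) := by
  funext u
  rcases u with v | p
  · rfl
  · exact eq_of_leS_some (h (.inr p))

variable [DecidableEq V] {f : V → BExpr V} {σ : {v : V // v ∈ X} → Option Bool}

theorem keval_pertEnc_inl (n : V → Option Bool) (v : V) :
    (pertEnc f X (.inl v)).keval (Sum.elim n (encodePert σ)) = (pertNet f X σ v).keval n := by
  by_cases hv : v ∈ X
  · simp only [pertEnc, pertNet, hv, dite_true, BExpr.keval, BExpr.keval_map_s15, Sum.elim_comp_inl,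
      Sum.elim_inr, encodePert, tmin_encodeBit_tmax]
    cases σ ⟨v, hv⟩ <;> rfl
  · simp only [pertEnc, pertNet, hv, dite_false, BExpr.keval_map_s15, Sum.elim_comp_inl]

theorem isTrapK_pertEnc_iff (n : V → Option Bool) :
    IsTrapK (pertEnc f X) (Sum.elim n (encodePert σ)) ↔ IsTrapK (pertNet f X σ) n := by
  refine ⟨fun h v => by simpa [keval_pertEnc_inl] using h (.inl v), fun h u => ?_⟩
  rcases u with v | ⟨x, _ | _⟩
  · simpa [keval_pertEnc_inl] using h v
  · simp only [pertEnc, BExpr.keval, Sum.elim_inr, encodePert]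
    rcases σ x with _ | _ | _ <;> decide
  · exact leS_refl _

theorem isMinTrapK_pertEnc_iff (n : V → Option Bool) :
    IsMinTrapK (pertEnc f X) (Sum.elim n (encodePert σ)) ↔ IsMinTrapK (pertNet f X σ) n := by
  refine ⟨fun h => ⟨(isTrapK_pertEnc_iff n).1 h.1, fun n' hn' hle => ?_⟩,
    fun h => ⟨(isTrapK_pertEnc_iff n).2 h.1, fun m' hm' hle => ?_⟩⟩
  · have hlift : ∀ u, leS (Sum.elim n' (encodePert σ) u) (Sum.elim n (encodePert σ) u)
      | .inl v => hle v
      | .inr _ => leS_refl _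
    exact congrArg (· ∘ Sum.inl) (h.2 _ ((isTrapK_pertEnc_iff n').2 hn') hlift)
  · rw [eq_sum_elim_of_leS hle] at hm' ⊢
    rw [h.2 _ ((isTrapK_pertEnc_iff _).1 hm') (fun v => hle (.inl v))]

theorem IsMinTrapK.eq_sum_elim_decodePert {m : PVar V X → Option Bool}
    (hm : IsMinTrapK (pertEnc f X) m) :
    m = Sum.elim (m ∘ .inl)
      (encodePert fun x => decodePert (m (.inr (x, true))) (m (.inr (x, false)))) := by
  funext u
  rcases u with v | ⟨x, b⟩
  · rfl
  have hk : m (.inr (x, true)) ≠ none :=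
    hm.ne_none (b := false) (by simp [pertEnc, BExpr.keval, leS_refl])
  have ho : m (.inr (x, false)) ≠ none :=
    hm.ne_none (b := false) (by simp [pertEnc, BExpr.keval, tmin, leS_refl])
  have hvalid := encodeBit_decodePert hk ho
    (by simpa [pertEnc, BExpr.keval] using hm.1 (.inr (x, false)))
  cases b
  · exact hvalid.2.symm
  · exact hvalid.1.symm

end Encoding

theorem perturbation_counting_correctness_general {V : Type} [DecidableEq V]
    (f : V → BExpr V) (X : Finset V) (β : List (V × Option Bool)) :
    Set.ncard {σ : {v : V // v ∈ X} → Option Bool |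
        ∃ m : V → Option Bool, IsMinTrapK (pertNet f X σ) m ∧ SatPhenotype β m} =
    Set.ncard
      ((fun (m : PVar V X → Option Bool) (p : {v : V // v ∈ X} × Bool) => m (.inr p)) ''
        {m | IsMinTrapK (pertEnc f X) m ∧ SatPhenotype β (fun v => m (.inl v))}) := by
  rw [← Set.ncard_image_of_injective _ encodePert_injective]
  congr 1
  ext r
  constructor
  · rintro ⟨σ, ⟨n, hn, hβ⟩, rfl⟩
    exact ⟨Sum.elim n (encodePert σ), ⟨(isMinTrapK_pertEnc_iff n).2 hn, hβ⟩, rfl⟩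
  · rintro ⟨m, ⟨hm, hβ⟩, rfl⟩
    have hlift := hm.eq_sum_elim_decodePert
    refine ⟨_, ⟨m ∘ .inl, (isMinTrapK_pertEnc_iff _).1 (hlift ▸ hm), hβ⟩, ?_⟩
    exact (congrArg (fun m p => m (.inr p)) hlift).symm

/-- Perturbation counting correctness: the number of perturbations σ such that
`f^σ` has a minimal trap space satisfying the phenotype `β` equals the number of
distinct restrictions to the encoding variables of minimal trap spaces of the
encoding network `g` satisfying `β`. -/
theorem perturbation_counting_correctness {V : Type} [Fintype V] [DecidableEq V]
    (f : V → BExpr V) (X : Finset V) (β : List (V × Option Bool)) :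
    Set.ncard {σ : {v : V // v ∈ X} → Option Bool |
        ∃ m : V → Option Bool, IsMinTrapK (pertNet f X σ) m ∧ SatPhenotype β m} =
    Set.ncard
      ((fun (m : PVar V X → Option Bool) (p : {v : V // v ∈ X} × Bool) => m (.inr p)) ''
        {m | IsMinTrapK (pertEnc f X) m ∧ SatPhenotype β (fun v => m (.inl v))}) :=
  perturbation_counting_correctness_general f X β
end
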